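/- Let κ₀ ∈ (1,2), C > 0, and suppose nonnegative reals (ω_i)_{i≥1} satisfy ∑_{i=r}^∞ ∑_{j=r}^∞ (ij)^{κ₀/2} ω_i ω_j ≤ (2/C)·M/r for every r ≥ 1, where M = ∑_{i=1}^∞ i ω_i < ∞. Then (∑_{i=1}^∞ i ω_i)² ≤ D·M, where D = (2/C)·(∑_{k=1}^∞ k^{-(κ₀+1)/2})². -/
import Mathlib

open Finset

theorem stmt_18 (C κ₀ : ℝ) (hC : 0 < C) (h1 : 1 < κ₀) (h2 : κ₀ < 2)
    (ω : ℕ → ℝ) (hω : ∀ i, 0 ≤ ω i)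
    (hM : Summable (fun i : ℕ => ((i : ℝ) + 1) * ω (i + 1)))
    (hsum : ∀ r : ℕ, 1 ≤ r → Summable (fun p : ℕ × ℕ =>
      (((p.1 + r : ℕ) : ℝ) * ((p.2 + r : ℕ) : ℝ)) ^ (κ₀ / 2) * ω (p.1 + r) * ω (p.2 + r)))
    (htail : ∀ r : ℕ, 1 ≤ r →
      ∑' i : ℕ, ∑' j : ℕ,
          (((i + r : ℕ) : ℝ) * ((j + r : ℕ) : ℝ)) ^ (κ₀ / 2) * ω (i + r) * ω (j + r)
        ≤ (2 / C) * (∑' i : ℕ, ((i : ℝ) + 1) * ω (i + 1)) / r) :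
    (∑' i : ℕ, ((i : ℝ) + 1) * ω (i + 1)) ^ 2
      ≤ (2 / C) * (∑' k : ℕ, ((k : ℝ) + 1) ^ (-((κ₀ + 1) / 2))) ^ 2
        * (∑' i : ℕ, ((i : ℝ) + 1) * ω (i + 1)) := by
  set M := ∑' i : ℕ, ((i : ℝ) + 1) * ω (i + 1) with hMdef
  set S := ∑' k : ℕ, ((k : ℝ) + 1) ^ (-((κ₀ + 1) / 2)) with hSdef
  have hM0 : 0 ≤ M := tsum_nonneg fun i => mul_nonneg (by positivity) (hω _)
  have hS0 : 0 ≤ S := tsum_nonneg fun k => (Real.rpow_pos_of_pos (by positivity) _).le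
  set a : ℕ → ℝ := fun j => ((j : ℝ) + 1) ^ (κ₀ / 2) * ω (j + 1) with hadef
  have ha0 : ∀ j, 0 ≤ a j := fun j => mul_nonneg (Real.rpow_nonneg (by positivity) _) (hω _)
  have hale : ∀ j, a j ≤ ((j : ℝ) + 1) * ω (j + 1) := by
    intro j
    have hb : (1:ℝ) ≤ (j : ℝ) + 1 := le_add_of_nonneg_left (Nat.cast_nonneg j)
    have : ((j : ℝ) + 1) ^ (κ₀ / 2) ≤ ((j : ℝ) + 1) ^ (1:ℝ) :=
      Real.rpow_le_rpow_of_exponent_le hb (by linarith)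
    rw [Real.rpow_one] at this
    exact mul_le_mul_of_nonneg_right this (hω _)
  have hasum : Summable a := Summable.of_nonneg_of_le ha0 hale hM
  have hashift : ∀ k : ℕ, Summable (fun i => a (i + k)) := fun k =>
    (summable_nat_add_iff k).2 hasum
  set T : ℕ → ℝ := fun k => ∑' i : ℕ, a (i + k) with hTdef
  have hT0 : ∀ k, 0 ≤ T k := fun k => tsum_nonneg fun i => ha0 _
  -- tail bound
  have hTsq : ∀ k : ℕ, T k ^ 2 ≤ (2 / C) * M / ((k : ℝ) + 1) := by
    intro k
    have h := htail (k + 1) (Nat.le_add_left 1 k)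
    have heq : ∀ i j : ℕ,
        (((i + (k+1) : ℕ) : ℝ) * ((j + (k+1) : ℕ) : ℝ)) ^ (κ₀ / 2) * ω (i + (k+1)) * ω (j + (k+1))
          = a (i + k) * a (j + k) := by
      intro i j
      have hi : ((i + (k+1) : ℕ) : ℝ) = ((i + k : ℕ) : ℝ) + 1 := by push_cast; ring
      have hj : ((j + (k+1) : ℕ) : ℝ) = ((j + k : ℕ) : ℝ) + 1 := by push_cast; ring
      have hωi : i + (k+1) = (i + k) + 1 := by omega
      have hωj : j + (k+1) = (j + k) + 1 := by omega
      rw [hi, hj, hωi, hωj, Real.mul_rpow (by positivity) (by positivity), hadef]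
      ring
    have hL : (∑' i : ℕ, ∑' j : ℕ,
        (((i + (k+1) : ℕ) : ℝ) * ((j + (k+1) : ℕ) : ℝ)) ^ (κ₀ / 2) * ω (i + (k+1)) * ω (j + (k+1)))
        = T k ^ 2 := by
      have : ∀ i : ℕ, (∑' j : ℕ,
          (((i + (k+1) : ℕ) : ℝ) * ((j + (k+1) : ℕ) : ℝ)) ^ (κ₀ / 2) * ω (i + (k+1)) * ω (j + (k+1)))
          = a (i + k) * T k := by
        intro i
        rw [show (fun j => (((i + (k+1) : ℕ) : ℝ) * ((j + (k+1) : ℕ) : ℝ)) ^ (κ₀ / 2)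
            * ω (i + (k+1)) * ω (j + (k+1))) = fun j => a (i + k) * a (j + k) from
          funext fun j => heq i j, tsum_mul_left]
      rw [tsum_congr this, tsum_mul_right, sq]
    rw [hL] at h
    have : ((k+1 : ℕ) : ℝ) = (k : ℝ) + 1 := by push_cast; ring
    rwa [this] at h
  -- key pointwise bound
  have hkey : ∀ k : ℕ, ((k : ℝ) + 1) ^ (-(κ₀ / 2)) * T k
      ≤ Real.sqrt ((2 / C) * M) * ((k : ℝ) + 1) ^ (-((κ₀ + 1) / 2)) := by
    intro k
    have hk1 : (0:ℝ) < (k : ℝ) + 1 := by positivity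
    have hcm : (0:ℝ) ≤ (2 / C) * M := by positivity
    have hT : T k ≤ Real.sqrt ((2 / C) * M / ((k : ℝ) + 1)) := by
      calc T k = Real.sqrt (T k ^ 2) := (Real.sqrt_sq (hT0 k)).symm
        _ ≤ _ := Real.sqrt_le_sqrt (hTsq k)
    have hs : Real.sqrt ((2 / C) * M / ((k : ℝ) + 1))
        = Real.sqrt ((2 / C) * M) * ((k : ℝ) + 1) ^ (-(1/2 : ℝ)) := by
      rw [Real.sqrt_div hcm, Real.rpow_neg hk1.le, div_eq_mul_inv, Real.sqrt_eq_rpow ((k:ℝ)+1)]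
    calc ((k : ℝ) + 1) ^ (-(κ₀ / 2)) * T k
        ≤ ((k : ℝ) + 1) ^ (-(κ₀ / 2)) * (Real.sqrt ((2 / C) * M) * ((k : ℝ) + 1) ^ (-(1/2 : ℝ))) := by
          rw [← hs]; exact mul_le_mul_of_nonneg_left hT (Real.rpow_nonneg hk1.le _)
      _ = Real.sqrt ((2 / C) * M) * (((k : ℝ) + 1) ^ (-(κ₀ / 2)) * ((k : ℝ) + 1) ^ (-(1/2 : ℝ))) := by
          ring
      _ = Real.sqrt ((2 / C) * M) * ((k : ℝ) + 1) ^ (-((κ₀ + 1) / 2)) := by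
          rw [← Real.rpow_add hk1, show -(κ₀ / 2) + -(1/2 : ℝ) = -((κ₀ + 1) / 2) by ring]
  -- summability of the exponent series
  have hdsum : Summable (fun k : ℕ => ((k : ℝ) + 1) ^ (-((κ₀ + 1) / 2))) := by
    have h0 : Summable (fun n : ℕ => (n : ℝ) ^ (-((κ₀ + 1) / 2))) := by
      rw [Real.summable_nat_rpow]; linarith
    have := (summable_nat_add_iff 1).2 h0
    refine this.congr fun n => ?_
    push_cast; ring_nf
  -- the main finite-sum estimate
  have hmain : ∀ N : ℕ, (∑ j ∈ range N, ((j : ℝ) + 1) * ω (j + 1))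
      ≤ Real.sqrt ((2 / C) * M) * S := by
    intro N
    have step1 : ∀ j ∈ range N, ((j : ℝ) + 1) * ω (j + 1)
        ≤ (∑ k ∈ range (j + 1), ((k : ℝ) + 1) ^ (-(κ₀ / 2))) * a j := by
      intro j _
      have hb : (0:ℝ) < (j : ℝ) + 1 := by positivity
      have hlow : ((j : ℝ) + 1) * ((j : ℝ) + 1) ^ (-(κ₀ / 2))
          ≤ ∑ k ∈ range (j + 1), ((k : ℝ) + 1) ^ (-(κ₀ / 2)) := by
        have hcard : (range (j + 1)).card • (((j : ℝ) + 1) ^ (-(κ₀ / 2)))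
            ≤ ∑ k ∈ range (j + 1), ((k : ℝ) + 1) ^ (-(κ₀ / 2)) := by
          apply Finset.card_nsmul_le_sum
          intro k hk
          have hk' : k ≤ j := Nat.lt_succ_iff.mp (mem_range.mp hk)
          have hkj : (k : ℝ) ≤ (j : ℝ) := Nat.cast_le.mpr hk'
          exact Real.rpow_le_rpow_of_nonpos (by positivity) (by linarith) (by linarith)
        rw [card_range, nsmul_eq_mul] at hcard
        push_cast at hcard
        linarith
      have h2' : ((j : ℝ) + 1) * ((j : ℝ) + 1) ^ (-(κ₀ / 2)) * a j = ((j : ℝ) + 1) * ω (j + 1) := by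
        rw [hadef]
        have : ((j : ℝ) + 1) ^ (-(κ₀ / 2)) * ((j : ℝ) + 1) ^ (κ₀ / 2) = 1 := by
          rw [← Real.rpow_add hb]; norm_num
        calc ((j : ℝ) + 1) * ((j : ℝ) + 1) ^ (-(κ₀ / 2)) * (((j : ℝ) + 1) ^ (κ₀ / 2) * ω (j + 1))
            = ((j : ℝ) + 1) * (((j : ℝ) + 1) ^ (-(κ₀ / 2)) * ((j : ℝ) + 1) ^ (κ₀ / 2)) * ω (j + 1) := by ring
          _ = ((j : ℝ) + 1) * ω (j + 1) := by rw [this]; ring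
      calc ((j : ℝ) + 1) * ω (j + 1) = ((j : ℝ) + 1) * ((j : ℝ) + 1) ^ (-(κ₀ / 2)) * a j := h2'.symm
        _ ≤ _ := mul_le_mul_of_nonneg_right hlow (ha0 j)
    calc (∑ j ∈ range N, ((j : ℝ) + 1) * ω (j + 1))
        ≤ ∑ j ∈ range N, (∑ k ∈ range (j + 1), ((k : ℝ) + 1) ^ (-(κ₀ / 2))) * a j :=
          Finset.sum_le_sum step1
      _ = ∑ j ∈ range N, ∑ k ∈ range N,
            (if k ≤ j then ((k : ℝ) + 1) ^ (-(κ₀ / 2)) * a j else 0) := by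
          refine Finset.sum_congr rfl fun j hj => ?_
          have hjN := mem_range.mp hj
          rw [Finset.sum_mul, ← Finset.sum_filter]
          apply Finset.sum_congr _ fun _ _ => rfl
          ext k
          simp only [mem_filter, mem_range]
          omega
      _ = ∑ k ∈ range N, ∑ j ∈ range N,
            (if k ≤ j then ((k : ℝ) + 1) ^ (-(κ₀ / 2)) * a j else 0) := Finset.sum_comm
      _ ≤ ∑ k ∈ range N, ((k : ℝ) + 1) ^ (-(κ₀ / 2)) * T k := by
          refine Finset.sum_le_sum fun k _ => ?_
          have hc0 : (0:ℝ) ≤ ((k : ℝ) + 1) ^ (-(κ₀ / 2)) :=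
            (Real.rpow_pos_of_pos (by positivity) _).le
          rw [← Finset.sum_filter, ← Finset.mul_sum]
          refine mul_le_mul_of_nonneg_left ?_ hc0
          have hfe : (range N).filter (fun j => k ≤ j) = Finset.Ico k N := by
            ext j; simp only [mem_filter, mem_range, Finset.mem_Ico]; omega
          rw [hfe, Finset.sum_Ico_eq_sum_range]
          have : ∀ i, a (k + i) = a (i + k) := fun i => by rw [Nat.add_comm]
          rw [Finset.sum_congr rfl fun i _ => this i]
          exact Summable.sum_le_tsum (range (N - k)) (fun i _ => ha0 _) (hashift k)
      _ ≤ ∑ k ∈ range N, Real.sqrt ((2 / C) * M) * ((k : ℝ) + 1) ^ (-((κ₀ + 1) / 2)) :=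
          Finset.sum_le_sum fun k _ => hkey k
      _ = Real.sqrt ((2 / C) * M) * ∑ k ∈ range N, ((k : ℝ) + 1) ^ (-((κ₀ + 1) / 2)) := by
          rw [Finset.mul_sum]
      _ ≤ Real.sqrt ((2 / C) * M) * S := by
          apply mul_le_mul_of_nonneg_left _ (Real.sqrt_nonneg _)
          exact Summable.sum_le_tsum (range N) (fun k _ => Real.rpow_nonneg (by positivity) _) hdsum
  -- pass to the limit
  have hlim : M ≤ Real.sqrt ((2 / C) * M) * S := by
    refine le_of_tendsto' hM.hasSum.tendsto_sum_nat hmain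
  -- conclude
  have hsq : M ^ 2 ≤ (Real.sqrt ((2 / C) * M) * S) ^ 2 := pow_le_pow_left₀ hM0 hlim 2
  have : (Real.sqrt ((2 / C) * M) * S) ^ 2 = (2 / C) * M * S ^ 2 := by
    rw [mul_pow, Real.sq_sqrt (by positivity)]
  rw [this] at hsq
  calc M ^ 2 ≤ (2 / C) * M * S ^ 2 := hsq
    _ = (2 / C) * S ^ 2 * M := by ring
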